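/- For all integers 2 ≤ j ≤ n with n ≥ 17, one has (j/n)^{(j-2)/4} ≤ (6/7)^{j-2} + (7/8)^{n-j}. -/

import Mathlib

/-!
Put `x = j / n`. If `x ≤ (6/7)^4`, then `x^((j-2)/4) ≤ (6/7)^(j-2)` by monotonicity of `rpow`.
Otherwise `j > 0.54 n`, and the first term of the series
`log ((1 + t) / (1 - t)) = 2 (t + t³/3 + ⋯)` with `t = (n - j)/(n + j)` gives
`log (n / j) ≥ 2 (n - j)/(n + j)`. Together with `exp (1/7) ≥ 8/7` this yields
`x^((j-2)/4) ≤ exp (-(n - j)/7) ≤ (7/8)^(n-j)` as soon as `2 (n + j) + 14 ≤ 7 j`,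
which holds for integers `17 ≤ n` and `1296 n < 2401 j`.
-/

open Real

lemma two_mul_le_log_sub_log {t : ℝ} (ht₀ : 0 ≤ t) (ht₁ : t < 1) :
    2 * t ≤ log (1 + t) - log (1 - t) := by
  have hs := hasSum_log_sub_log_of_abs_lt_one (abs_lt.2 ⟨by linarith, ht₁⟩)
  simpa using le_hasSum hs 0 fun k _ => by positivity

lemma two_mul_sub_div_add_le_log_div {a b : ℝ} (ha : 0 < a) (hab : a ≤ b) :
    2 * (b - a) / (b + a) ≤ log (b / a) := by
  have hb : 0 < b := ha.trans_le hab
  have hba : 0 < b + a := by linarith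
  have key := two_mul_le_log_sub_log (div_nonneg (sub_nonneg.2 hab) hba.le)
    ((div_lt_one hba).2 (by linarith))
  have hplus : 1 + (b - a) / (b + a) = 2 * b / (b + a) := by field_simp; ring
  have hminus : 1 - (b - a) / (b + a) = 2 * a / (b + a) := by field_simp; ring
  rw [hplus, hminus, ← log_div (by positivity) (by positivity)] at key
  rw [mul_div_assoc]
  convert key using 2
  field_simp

lemma rpow_div_le_exp {a b s : ℝ} (ha : 0 < a) (hab : a ≤ b) (hs : 0 ≤ s) :
    (a / b) ^ s ≤ exp (-(s * (2 * (b - a) / (b + a)))) := by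
  rw [rpow_def_of_pos (div_pos ha (ha.trans_le hab)), exp_le_exp, ← inv_div, log_inv]
  nlinarith [two_mul_sub_div_add_le_log_div ha hab]

lemma exp_neg_nat_mul_le_inv_one_add_pow {x : ℝ} (hx : 0 ≤ x) (m : ℕ) :
    exp (-(m * x)) ≤ (1 + x)⁻¹ ^ m := by
  rw [← mul_neg, exp_nat_mul, exp_neg]
  exact pow_le_pow_left₀ (by positivity)
    (inv_anti₀ (by positivity) (by linarith [add_one_le_exp x])) m

lemma rpow_div_natCast_le_pow {x c : ℝ} (hx : 0 ≤ x) (hc : 0 ≤ c) {k : ℕ} (hk : k ≠ 0)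
    (hxc : x ≤ c ^ k) (m : ℕ) : x ^ ((m : ℝ) / k) ≤ c ^ m :=
  calc x ^ ((m : ℝ) / k) ≤ (c ^ k) ^ ((m : ℝ) / k) := rpow_le_rpow hx hxc (by positivity)
    _ = c ^ m := by
      rw [← rpow_natCast c k, ← rpow_mul hc, mul_div_cancel₀ _ (by exact_mod_cast hk),
        rpow_natCast]

lemma div_rpow_le_seven_div_eight_pow {n j : ℕ} (hjn : j ≤ n)
    (h : 2 * (n + j) + 14 ≤ 7 * j) :
    ((j : ℝ) / n) ^ (((j : ℝ) - 2) / 4) ≤ ((7 : ℝ) / 8) ^ (n - j) := by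
  have hreal : 2 * ((n : ℝ) + j) ≤ 7 * ((j : ℝ) - 2) := by
    have : (2 * (n + j) + 14 : ℝ) ≤ 7 * j := by exact_mod_cast h
    linarith
  have hj₀ : (0 : ℝ) < j := by linarith [(n.cast_nonneg : (0 : ℝ) ≤ n)]
  have hsum : (0 : ℝ) < n + j := by positivity
  have hjn' : (j : ℝ) ≤ n := by exact_mod_cast hjn
  have hexponent : ((n - j : ℕ) : ℝ) * (1 / 7)
      ≤ ((j : ℝ) - 2) / 4 * (2 * ((n : ℝ) - j) / (n + j)) := by
    have hfactor : ((j : ℝ) - 2) / 4 * (2 * ((n : ℝ) - j) / (n + j))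
        = ((n : ℝ) - j) * (((j : ℝ) - 2) / (2 * (n + j))) := by
      field_simp
      ring
    rw [Nat.cast_sub hjn, hfactor]
    exact mul_le_mul_of_nonneg_left ((le_div_iff₀ (by positivity)).2 (by linarith))
      (by linarith)
  calc ((j : ℝ) / n) ^ (((j : ℝ) - 2) / 4)
      ≤ exp (-(((j : ℝ) - 2) / 4 * (2 * ((n : ℝ) - j) / (n + j)))) :=
        rpow_div_le_exp hj₀ hjn' (by linarith)
    _ ≤ exp (-((n - j : ℕ) * (1 / 7))) := exp_le_exp.2 (neg_le_neg hexponent)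
    _ ≤ (1 + 1 / 7)⁻¹ ^ (n - j) := exp_neg_nat_mul_le_inv_one_add_pow (by norm_num) _
    _ = (7 / 8) ^ (n - j) := by norm_num

theorem ratio_pow_le (n j : ℕ) (hj : 2 ≤ j) (hjn : j ≤ n) (hn : 17 ≤ n) :
    ((j : ℝ) / (n : ℝ)) ^ (((j : ℝ) - 2) / 4) ≤
      ((6 : ℝ) / 7) ^ (j - 2) + ((7 : ℝ) / 8) ^ (n - j) := by
  rcases le_or_gt (2401 * j) (1296 * n) with hsmall | hlarge
  · have hratio : (j : ℝ) / n ≤ (6 / 7) ^ 4 := by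
      rw [div_le_iff₀ (by positivity)]
      have : (2401 * j : ℝ) ≤ 1296 * n := by exact_mod_cast hsmall
      linarith
    have hexp : ((j : ℝ) - 2) / 4 = ((j - 2 : ℕ) : ℝ) / (4 : ℕ) := by
      push_cast [Nat.cast_sub hj]
      ring
    calc ((j : ℝ) / n) ^ (((j : ℝ) - 2) / 4) ≤ (6 / 7) ^ (j - 2) := by
          rw [hexp]
          exact rpow_div_natCast_le_pow (by positivity) (by norm_num) four_ne_zero hratio _
      _ ≤ _ := le_add_of_nonneg_right (by positivity)
  · have hgap : 2 * (n + j) + 14 ≤ 7 * j := by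
      -- over ℝ this only follows for n ≥ 21; for smaller n the integrality of j is needed
      rcases le_or_gt n 20 with hn20 | hn20
      · interval_cases n <;> omega
      · omega
    calc ((j : ℝ) / n) ^ (((j : ℝ) - 2) / 4) ≤ (7 / 8) ^ (n - j) :=
          div_rpow_le_seven_div_eight_pow hjn hgap
      _ ≤ _ := le_add_of_nonneg_left (by positivity)
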